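/- arXiv:2403.02462 — 4 statements merged into one kernel-verified Lean document; each statement's English description precedes it below -/
import Mathlib

section
/- Let N ≥ 1 and let h : ℤ → M_N(ℂ) satisfy Σ_{n∈ℤ} ‖h(n)‖_op < ∞. Let H be the bounded convolution operator on ℓ²(ℤ, ℂ^N) with kernel h, and let P be the orthogonal projection onto {Ψ ∈ ℓ²(ℤ, ℂ^N) : Ψ_n = 0 for all n < 0}. Then the off-diagonal part K := P H (1−P) + (1−P) H P is a compact operator on ℓ²(ℤ, ℂ^N). -/
/-! The off-diagonal part of a convolution operator is the sum over `m` of the pieces `K_m`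
that apply `h m` to the shifted sequence and keep only the sites `n` for which `n` and `n - m` lie
on opposite sides of `0`: there are `|m|` of them, so `K_m` has finite rank, and `‖K_m‖ ≤ ‖h m‖`.
The series `∑ K_m` therefore converges in operator norm, and its sum is compact as a norm limit of
compact operators. -/

open scoped ComplexConjugate Matrix

noncomputable section

/-- ℓ²(ℤ, ℂ^N) -/
abbrev L2Z (N : ℕ) : Type := lp (fun _ : ℤ => EuclideanSpace ℂ (Fin N)) 2

/-- The bounded operator on ℂ^N associated with an N×N complex matrix. -/
noncomputable def matCLM {N : ℕ} (A : Matrix (Fin N) (Fin N) ℂ) :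
    EuclideanSpace ℂ (Fin N) →L[ℂ] EuclideanSpace ℂ (Fin N) :=
  Matrix.toEuclideanCLM (𝕜 := ℂ) A

open scoped ENNReal

section TruncShift

variable {𝕜 : Type*} [NontriviallyNormedField 𝕜] {α : Type*} [AddGroup α] [DecidableEq α]
  {E F : Type*} [NormedAddCommGroup E] [NormedSpace 𝕜 E] [NormedAddCommGroup F] [NormedSpace 𝕜 F]
  {p : ℝ≥0∞} [Fact (1 ≤ p)]

def truncShift (S : Finset α) (A : E →L[𝕜] F) (m : α) :
    lp (fun _ : α => E) p →L[𝕜] lp (fun _ : α => F) p :=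
  ∑ n ∈ S, (lp.singleContinuousLinearMap 𝕜 _ p n ∘L A) ∘L lp.evalCLM 𝕜 _ p (n - m)

theorem truncShift_apply (S : Finset α) (A : E →L[𝕜] F) (m : α) (Ψ : lp (fun _ : α => E) p)
    (k : α) : truncShift S A m Ψ k = if k ∈ S then A (Ψ (k - m)) else 0 := by
  simp only [truncShift, sum_apply, ContinuousLinearMap.comp_apply,
    lp.singleContinuousLinearMap_apply, lp.coeFn_sum, Finset.sum_apply, lp.single_apply,
    Pi.single_apply, Finset.sum_ite_eq]
  rfl

theorem norm_truncShift_le (hp : p ≠ ∞) (S : Finset α) (A : E →L[𝕜] F) (m : α) :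
    ‖(truncShift S A m : lp (fun _ : α => E) p →L[𝕜] lp (fun _ : α => F) p)‖ ≤ ‖A‖ := by
  have hp' : 0 < p.toReal := ENNReal.toReal_pos (zero_lt_one.trans_le Fact.out).ne' hp
  refine ContinuousLinearMap.opNorm_le_bound _ (norm_nonneg _) fun Ψ => ?_
  refine lp.norm_le_of_tsum_le hp' (by positivity) ?_
  have h_support : ∀ k ∉ S, ‖truncShift S A m Ψ k‖ ^ p.toReal = 0 := fun k hk => by
    rw [truncShift_apply, if_neg hk, norm_zero, Real.zero_rpow hp'.ne']
  calc ∑' k, ‖truncShift S A m Ψ k‖ ^ p.toReal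
      = ∑ k ∈ S, ‖truncShift S A m Ψ k‖ ^ p.toReal := tsum_eq_sum h_support
    _ ≤ ∑ k ∈ S, (‖A‖ * ‖Ψ (k - m)‖) ^ p.toReal := by
        gcongr with k hk
        rw [truncShift_apply, if_pos hk]
        exact A.le_opNorm _
    _ = ‖A‖ ^ p.toReal * ∑ j ∈ S.image (· - m), ‖Ψ j‖ ^ p.toReal := by
        rw [Finset.sum_image fun _ _ _ _ h => sub_left_injective h, Finset.mul_sum]
        simp_rw [Real.mul_rpow (norm_nonneg _) (norm_nonneg _)]
    _ ≤ ‖A‖ ^ p.toReal * ‖Ψ‖ ^ p.toReal := by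
        gcongr
        exact lp.sum_rpow_le_norm_rpow hp' Ψ _
    _ = (‖A‖ * ‖Ψ‖) ^ p.toReal := (Real.mul_rpow (norm_nonneg _) (norm_nonneg _)).symm

theorem isCompactOperator_truncShift [LocallyCompactSpace E] (S : Finset α) (A : E →L[𝕜] F)
    (m : α) :
    IsCompactOperator (truncShift S A m : lp (fun _ : α => E) p → lp (fun _ : α => F) p) :=
  Submodule.sum_mem (compactOperator (RingHom.id 𝕜) _ _) fun n _ =>
    (isCompactOperator_of_locallyCompactSpace_rng
      (lp.singleContinuousLinearMap 𝕜 (fun _ : α => F) p n ∘L A)).comp_clm _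

end TruncShift

theorem isCompactOperator_of_hasSum {ι 𝕜 X Y : Type*} [NontriviallyNormedField 𝕜]
    [NormedAddCommGroup X] [NormedSpace 𝕜 X] [NormedAddCommGroup Y] [NormedSpace 𝕜 Y]
    [CompleteSpace Y] {T : ι → X →L[𝕜] Y} {B : X →L[𝕜] Y} (hB : HasSum T B)
    (hT : ∀ i, IsCompactOperator (T i)) : IsCompactOperator B :=
  isCompactOperator_of_tendsto hB <| .of_forall fun _ =>
    Submodule.sum_mem (compactOperator (RingHom.id 𝕜) X Y) fun i _ => hT i

theorem Int.mem_Ico_min_max_zero_iff (m n : ℤ) :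
    n ∈ Finset.Ico (min m 0) (max m 0) ↔ (0 ≤ n ↔ n - m < 0) := by
  simp only [Finset.mem_Ico, min_le_iff, lt_max_iff]
  omega

section OffDiagonal

variable {𝕜 : Type*} [NontriviallyNormedField 𝕜] {E : Type*} [NormedAddCommGroup E]
  [NormedSpace 𝕜 E] {p : ℝ≥0∞} [Fact (1 ≤ p)]
  {P : lp (fun _ : ℤ => E) p →L[𝕜] lp (fun _ : ℤ => E) p}

theorem one_sub_apply_of_apply_eq_ite (hP : ∀ Ψ n, P Ψ n = if 0 ≤ n then Ψ n else 0)
    (Ψ : lp (fun _ : ℤ => E) p) (n : ℤ) : (1 - P) Ψ n = if 0 ≤ n then 0 else Ψ n := by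
  rw [sub_apply, one_apply_eq_self, lp.coeFn_sub, Pi.sub_apply, hP]
  split_ifs <;> simp

theorem offDiagonal_apply_of_apply_eq_ite (hP : ∀ Ψ n, P Ψ n = if 0 ≤ n then Ψ n else 0)
    (H : lp (fun _ : ℤ => E) p →L[𝕜] lp (fun _ : ℤ => E) p) (Ψ : lp (fun _ : ℤ => E) p) (n : ℤ) :
    (P ∘L H ∘L (1 - P) + (1 - P) ∘L H ∘L P :
      lp (fun _ : ℤ => E) p →L[𝕜] lp (fun _ : ℤ => E) p) Ψ n
      = if 0 ≤ n then H ((1 - P) Ψ) n else H (P Ψ) n := by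
  rw [add_apply, lp.coeFn_add, Pi.add_apply]
  simp only [ContinuousLinearMap.comp_apply, hP, one_sub_apply_of_apply_eq_ite hP]
  split_ifs <;> simp

theorem isCompactOperator_offDiagonal_of_convolution [ProperSpace E] (hp : p ≠ ∞)
    (A : ℤ → E →L[𝕜] E) (hA : Summable fun m => ‖A m‖)
    (H : lp (fun _ : ℤ => E) p →L[𝕜] lp (fun _ : ℤ => E) p)
    (hH : ∀ Ψ n, H Ψ n = ∑' m, A m (Ψ (n - m)))
    (hP : ∀ Ψ n, P Ψ n = if 0 ≤ n then Ψ n else 0) :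
    IsCompactOperator (P ∘L H ∘L (1 - P) + (1 - P) ∘L H ∘L P :
      lp (fun _ : ℤ => E) p →L[𝕜] lp (fun _ : ℤ => E) p) := by
  obtain ⟨B, hB⟩ : Summable fun m =>
      (truncShift (Finset.Ico (min m 0) (max m 0)) (A m) m :
        lp (fun _ : ℤ => E) p →L[𝕜] lp (fun _ : ℤ => E) p) :=
    .of_norm_bounded hA fun m => norm_truncShift_le hp _ _ _
  suffices P ∘L H ∘L (1 - P) + (1 - P) ∘L H ∘L P = B from
    this ▸ isCompactOperator_of_hasSum hB fun m => isCompactOperator_truncShift _ _ _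
  ext Ψ n
  have hB_apply : HasSum (fun m => truncShift (Finset.Ico (min m 0) (max m 0)) (A m) m Ψ n)
      (B Ψ n) := (hB.mapL (ContinuousLinearMap.apply 𝕜 _ Ψ)).mapL (lp.evalCLM 𝕜 _ p n)
  rw [← hB_apply.tsum_eq, offDiagonal_apply_of_apply_eq_ite hP]
  split_ifs with hn <;> rw [hH] <;> refine tsum_congr fun m => ?_ <;>
    simp only [truncShift_apply, Int.mem_Ico_min_max_zero_iff, one_sub_apply_of_apply_eq_ite hP,
      hP] <;>
    split_ifs <;> first | omega | rfl | exact map_zero _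

end OffDiagonal

theorem statement3_general (N : ℕ)
    (h : ℤ → Matrix (Fin N) (Fin N) ℂ)
    (hsum : Summable fun n : ℤ => ‖matCLM (h n)‖)
    (H P : L2Z N →L[ℂ] L2Z N)
    (hH : ∀ (Ψ : L2Z N) (n : ℤ), H Ψ n = ∑' m : ℤ, matCLM (h m) (Ψ (n - m)))
    (hP : ∀ (Ψ : L2Z N) (n : ℤ), P Ψ n = if 0 ≤ n then Ψ n else 0) :
    IsCompactOperator
      ((P ∘L H ∘L (1 - P) + (1 - P) ∘L H ∘L P : L2Z N →L[ℂ] L2Z N) : L2Z N → L2Z N) :=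
  isCompactOperator_offDiagonal_of_convolution ENNReal.ofNat_ne_top _ hsum H hH hP

/-- if P is the orthogonal projection onto the sequences supported on
{n ≥ 0} and H is a convolution operator with summable kernel, then the off-diagonal
part K = P H (1−P) + (1−P) H P is compact. -/
theorem statement3 (N : ℕ) (hN : 1 ≤ N)
    (h : ℤ → Matrix (Fin N) (Fin N) ℂ)
    (hsum : Summable fun n : ℤ => ‖matCLM (h n)‖)
    (H P : L2Z N →L[ℂ] L2Z N)
    (hH : ∀ (Ψ : L2Z N) (n : ℤ), H Ψ n = ∑' m : ℤ, matCLM (h m) (Ψ (n - m)))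
    (hP : ∀ (Ψ : L2Z N) (n : ℤ), P Ψ n = if 0 ≤ n then Ψ n else 0) :
    IsCompactOperator
      ((P ∘L H ∘L (1 - P) + (1 - P) ∘L H ∘L P : L2Z N →L[ℂ] L2Z N) : L2Z N → L2Z N) :=
  statement3_general N h hsum H P hH hP
end
end

section
/- Let J₁, J₂ ∈ ℂ and for k ∈ ℝ let H_k be the 2×2 Hermitian matrix with zero diagonal and off-diagonal entries J₁ + J₂e^{−ik} (upper right) and its complex conjugate (lower left). Set W := |J₁| + |J₂| and δ := ||J₁| − |J₂||. Then the union over k ∈ ℝ of the spectra of the matrices H_k equals [−W, −δ] ∪ [δ, W] (viewed as a subset of ℝ, all eigenvalues being real): ⋃_{k∈ℝ} σ(H_k) = [−W, −δ] ∪ [δ, W]. -/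
/-!
The fibre `H_k` has the form `!![0, a; conj a, 0]` with `a = J₁ + J₂ e^{-ik}`, whose spectrum is
`{|a|, -|a|}`. As `k` runs over `ℝ`, `J₂ e^{-ik}` runs over the circle of radius `|J₂|`, and on a
connected sphere `w ↦ ‖J₁ + w‖` takes a connected set of values whose extremes `|J₁| ± |J₂|` are
attained at `w` parallel and antiparallel to `J₁`; so the `|a|` fill exactly `[δ, W]`.
-/

open scoped ComplexConjugate Matrix

open Metric Set

theorem image_norm_add_sphere {E : Type*} [NormedAddCommGroup E] [NormedSpace ℝ E]
    (hE : 1 < Module.rank ℝ E) (a : E) {r : ℝ} (hr : 0 ≤ r) :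
    (fun w => ‖a + w‖) '' sphere 0 r = Icc |‖a‖ - r| (‖a‖ + r) := by
  have : Nontrivial E := rank_pos_iff_nontrivial.1 (zero_lt_one.trans hE)
  refine Subset.antisymm ?_ fun x hx => ?_
  · rintro _ ⟨w, hw, rfl⟩
    rw [mem_sphere_zero_iff_norm] at hw
    refine ⟨?_, hw ▸ norm_add_le a w⟩
    simpa [hw] using abs_norm_sub_norm_le a (-w)
  · obtain ⟨u, hu, hau⟩ : ∃ u : E, ‖u‖ = 1 ∧ a = ‖a‖ • u := by
      rcases eq_or_ne a 0 with rfl | ha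
      · simpa using exists_norm_eq E zero_le_one
      · exact ⟨‖a‖⁻¹ • a, by simp [norm_smul, ha], by simp [smul_smul, ha]⟩
    have hru : r • u ∈ sphere (0 : E) r := by simp [norm_smul, hu, abs_of_nonneg hr]
    have hmax : ‖a + r • u‖ = ‖a‖ + r := by
      nth_rw 1 [hau]
      rw [← add_smul, norm_smul, hu, mul_one, Real.norm_of_nonneg (by positivity)]
    have hmin : ‖a + -(r • u)‖ = |‖a‖ - r| := by
      nth_rw 1 [hau]
      rw [← sub_eq_add_neg, ← sub_smul, norm_smul, hu, mul_one, Real.norm_eq_abs]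
    refine ((isConnected_sphere hE 0 hr).isPreconnected.image _
      (continuous_const.add continuous_id).norm.continuousOn).Icc_subset ?_ ?_ hx
    · exact ⟨-(r • u), by simpa using hru, hmin⟩
    · exact ⟨r • u, hru, hmax⟩

theorem Complex.range_exp_neg_I_mul :
    range (fun k : ℝ => Complex.exp (-(Complex.I * k))) = sphere 0 1 := by
  refine Subset.antisymm ?_ fun z hz => ⟨-Complex.arg z, ?_⟩
  · rintro _ ⟨k, rfl⟩
    simp [Complex.norm_exp]
  · rw [mem_sphere_zero_iff_norm] at hz
    simpa [hz, mul_comm] using Complex.norm_mul_exp_arg_mul_I z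

theorem Complex.range_mul_exp_neg_I_mul (c : ℂ) :
    range (fun k : ℝ => c * Complex.exp (-(Complex.I * k))) = sphere 0 ‖c‖ := by
  rw [range_comp' (c * ·), Complex.range_exp_neg_I_mul]
  have := smul_sphere c (0 : ℂ) zero_le_one
  rwa [← image_smul, smul_zero, mul_one] at this

theorem range_norm_add_mul_exp (J₁ J₂ : ℂ) :
    range (fun k : ℝ => ‖J₁ + J₂ * Complex.exp (-(Complex.I * k))‖) =
      Icc |‖J₁‖ - ‖J₂‖| (‖J₁‖ + ‖J₂‖) := by
  rw [range_comp' (fun w => ‖J₁ + w‖), Complex.range_mul_exp_neg_I_mul,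
    image_norm_add_sphere (by simp [Complex.rank_real_complex]) J₁ (norm_nonneg _)]

theorem Matrix.spectrum_offDiag_conj (a : ℂ) :
    spectrum ℂ !![0, a; conj a, 0] = {(‖a‖ : ℂ), -(‖a‖ : ℂ)} := by
  ext z
  have hdet : (algebraMap ℂ _ z - !![0, a; conj a, 0]).det = (z + ‖a‖) * (z - ‖a‖) := by
    rw [Matrix.algebraMap_eq_diagonal, Matrix.det_fin_two]
    simp [Complex.mul_conj', ← sq, sq_sub_sq]
  rw [spectrum.mem_iff, Matrix.isUnit_iff_isUnit_det, isUnit_iff_ne_zero, not_not, hdet,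
    mul_eq_zero, add_eq_zero_iff_eq_neg, sub_eq_zero, or_comm, mem_insert_iff, mem_singleton_iff]

theorem Complex.conj_exp_neg_I_mul (k : ℝ) :
    conj (Complex.exp (-(Complex.I * k))) = Complex.exp (Complex.I * k) := by
  rw [← Complex.exp_conj]
  simp

theorem iUnion_pair_neg_ofReal {ι : Type*} (g : ι → ℝ) :
    ⋃ i, ({(g i : ℂ), -(g i : ℂ)} : Set ℂ) = (fun x : ℝ => (x : ℂ)) '' (-range g ∪ range g) := by
  ext z
  simp only [mem_iUnion, mem_insert_iff, mem_singleton_iff, mem_image, mem_union, mem_neg,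
    mem_range]
  constructor
  · rintro ⟨i, rfl | rfl⟩
    · exact ⟨g i, Or.inr ⟨i, rfl⟩, rfl⟩
    · exact ⟨-g i, Or.inl ⟨i, (neg_neg _).symm⟩, by push_cast; rfl⟩
  · rintro ⟨x, ⟨i, hi⟩ | ⟨i, rfl⟩, rfl⟩
    · exact ⟨i, Or.inr (by simp [hi])⟩
    · exact ⟨i, Or.inl rfl⟩

/-- the bulk spectrum of the SSH chain. The union over k ∈ ℝ of the
spectra of the Bloch fibers H_k = [[0, J₁ + J₂e^{−ik}], [conj(J₁+J₂e^{−ik}), 0]]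
equals [−W, −δ] ∪ [δ, W] with W = |J₁| + |J₂| and δ = ||J₁| − |J₂||, viewed inside ℂ. -/
theorem statement7 (J₁ J₂ : ℂ) :
    (⋃ k : ℝ, spectrum ℂ
        (!![(0 : ℂ), J₁ + J₂ * Complex.exp (-(Complex.I * k));
            conj J₁ + conj J₂ * Complex.exp (Complex.I * k), 0])) =
      (fun x : ℝ => (x : ℂ)) ''
        (Set.Icc (-(‖J₁‖ + ‖J₂‖)) (-|‖J₁‖ - ‖J₂‖|) ∪
          Set.Icc |‖J₁‖ - ‖J₂‖| (‖J₁‖ + ‖J₂‖)) := by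
  simp_rw [← Complex.conj_exp_neg_I_mul, ← map_mul, ← map_add, Matrix.spectrum_offDiag_conj]
  rw [iUnion_pair_neg_ofReal, range_norm_add_mul_exp, neg_Icc]
end

section
/- Let 𝓗 be a complex Hilbert space, let P : 𝓗 → 𝓗 be a bounded idempotent operator (P∘P = P) whose range has finite dimension m, and let A : 𝓗 → 𝓗 be a bounded operator with ‖P − A‖_op < 1. Then the range of A has dimension at least m (i.e. rank(A) ≥ m). -/
noncomputable section

/-- if P is a bounded idempotent on a complex Hilbert space whose range
has finite dimension m, and A is a bounded operator with ‖P − A‖ < 1, then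
rank(A) ≥ m. -/
theorem statement11 {H : Type*} [NormedAddCommGroup H] [InnerProductSpace ℂ H]
    [CompleteSpace H]
    (P A : H →L[ℂ] H) (hP : P ∘L P = P) (m : ℕ)
    [FiniteDimensional ℂ (LinearMap.range (P : H →ₗ[ℂ] H))]
    (hm : Module.finrank ℂ (LinearMap.range (P : H →ₗ[ℂ] H)) = m)
    (hPA : ‖P - A‖ < 1) :
    (m : Cardinal) ≤ Module.rank ℂ (LinearMap.range (A : H →ₗ[ℂ] H)) := by
  -- key: P x = x for x in range P
  have hfix : ∀ x ∈ LinearMap.range (P : H →ₗ[ℂ] H), P x = x := by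
    rintro x ⟨y, rfl⟩
    have := congrArg (fun T : H →L[ℂ] H => T y) hP
    simpa using this
  -- define the linear map from range P into range A induced by A
  let f : LinearMap.range (P : H →ₗ[ℂ] H) →ₗ[ℂ] LinearMap.range (A : H →ₗ[ℂ] H) :=
    LinearMap.codRestrict _ ((A : H →ₗ[ℂ] H).comp (LinearMap.range (P : H →ₗ[ℂ] H)).subtype)
      (fun x => ⟨x, rfl⟩)
  have hinj : Function.Injective f := by
    rw [← LinearMap.ker_eq_bot, LinearMap.ker_eq_bot']
    rintro ⟨x, hx⟩ hfx
    have hAx : A x = 0 := congrArg Subtype.val hfx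
    ext
    by_contra hx0
    have hxne : x ≠ 0 := hx0
    have h1 : ‖x‖ = ‖(P - A) x‖ := by
      rw [ContinuousLinearMap.sub_apply, hfix x hx, hAx, sub_zero]
    have h2 : ‖(P - A) x‖ ≤ ‖P - A‖ * ‖x‖ := (P - A).le_opNorm x
    have h3 : ‖P - A‖ * ‖x‖ < 1 * ‖x‖ :=
      mul_lt_mul_of_pos_right hPA (norm_pos_iff.mpr hxne)
    rw [one_mul] at h3
    exact absurd (h1.trans_le h2) (not_le.mpr h3)
  calc (m : Cardinal) = Module.rank ℂ (LinearMap.range (P : H →ₗ[ℂ] H)) := by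
        rw [← hm, Module.finrank_eq_rank]
    _ ≤ Module.rank ℂ (LinearMap.range (A : H →ₗ[ℂ] H)) :=
        LinearMap.rank_le_of_injective f hinj
end
end

section
/- Let u, v ∈ ℝ. Then 1 + e^{−iu} + e^{iv} = 0 if and only if there exist integers p, q such that either (u = 2π/3 + 2πp and v = 2π/3 + 2πq) or (u = −2π/3 + 2πp and v = −2π/3 + 2πq). -/
/-!
Put `a = e^{iu}` and `b = e^{iv}` on the unit circle. Conjugating `1 + a⁻¹ + b = 0` gives
`1 + a + b⁻¹ = 0`, and `a` times the first relation minus `b` times the second is `a - b = 0`.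
So `a = b` and `1 + a⁻¹ + a = 0`, i.e. `a² + a + 1 = 0`: `a` is one of the primitive cube roots
of unity `e^{±2πi/3}`.
-/

open Complex

theorem IsPrimitiveRoot.one_add_inv_add_self_eq_zero_iff {K : Type*} [Field K] {ζ z : K}
    (hζ : IsPrimitiveRoot ζ 3) (hz : z ≠ 0) : 1 + z⁻¹ + z = 0 ↔ z = ζ ∨ z = ζ⁻¹ := by
  have hζ0 : ζ ≠ 0 := hζ.ne_zero (by norm_num)
  have hsum : 1 + ζ + ζ ^ 2 = 0 := by
    simpa [Finset.sum_range_succ] using hζ.geom_sum_eq_zero (by norm_num)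
  have hfactor : 1 + z⁻¹ + z = z⁻¹ * ((z - ζ) * (z - ζ⁻¹)) := by
    field_simp
    linear_combination z * hsum
  rw [hfactor, mul_eq_zero, mul_eq_zero, sub_eq_zero, sub_eq_zero]
  simp [hz]

theorem Circle.eq_of_one_add_inv_add_eq_zero {a b : Circle} (h : 1 + (a : ℂ)⁻¹ + b = 0) :
    a = b := by
  have hconj : 1 + (a : ℂ) + (b : ℂ)⁻¹ = 0 := by
    simpa [← Circle.coe_inv, Circle.coe_inv_eq_conj] using congrArg (starRingEnd ℂ) h
  have ha := a.coe_ne_zero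
  have hb := b.coe_ne_zero
  ext
  field_simp at h hconj
  linear_combination h - hconj

theorem Circle.one_add_inv_add_eq_zero_iff {ζ : Circle} (hζ : IsPrimitiveRoot (ζ : ℂ) 3)
    {a b : Circle} : 1 + (a : ℂ)⁻¹ + b = 0 ↔ (a = ζ ∧ b = ζ) ∨ (a = ζ⁻¹ ∧ b = ζ⁻¹) := by
  constructor
  · intro h
    obtain rfl := Circle.eq_of_one_add_inv_add_eq_zero h
    rw [hζ.one_add_inv_add_self_eq_zero_iff a.coe_ne_zero, ← Circle.coe_inv,
      Circle.coe_inj, Circle.coe_inj] at h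
    tauto
  · rintro (⟨rfl, rfl⟩ | ⟨rfl, rfl⟩)
    · exact (hζ.one_add_inv_add_self_eq_zero_iff (Circle.coe_ne_zero _)).2 (Or.inl rfl)
    · exact (hζ.one_add_inv_add_self_eq_zero_iff (Circle.coe_ne_zero _)).2 (Or.inr rfl)

theorem isPrimitiveRoot_circleExp_two_pi_div_three :
    IsPrimitiveRoot (Circle.exp (2 * Real.pi / 3) : ℂ) 3 := by
  rw [Circle.coe_exp]
  convert Complex.isPrimitiveRoot_exp 3 (by norm_num) using 2
  push_cast
  ring

theorem Circle.exp_eq_exp_iff_exists_int {x y : ℝ} :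
    Circle.exp x = Circle.exp y ↔ ∃ n : ℤ, x = y + 2 * Real.pi * n := by
  simp only [Circle.exp_eq_exp, mul_comm (2 * Real.pi)]

/-- Dirac points of graphene: for u, v ∈ ℝ,
1 + e^{−iu} + e^{iv} = 0 iff (u, v) ≡ (2π/3, 2π/3) or (−2π/3, −2π/3) modulo 2π. -/
theorem statement18 (u v : ℝ) :
    1 + Complex.exp (-(Complex.I * (u : ℂ))) + Complex.exp (Complex.I * (v : ℂ)) = 0 ↔
      ∃ p q : ℤ,
        (u = 2 * Real.pi / 3 + 2 * Real.pi * p ∧ v = 2 * Real.pi / 3 + 2 * Real.pi * q) ∨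
        (u = -(2 * Real.pi / 3) + 2 * Real.pi * p ∧
          v = -(2 * Real.pi / 3) + 2 * Real.pi * q) := by
  have hexp : 1 + Complex.exp (-(Complex.I * u)) + Complex.exp (Complex.I * v) =
      1 + (Circle.exp u : ℂ)⁻¹ + Circle.exp v := by
    rw [Circle.coe_exp, Circle.coe_exp, ← Complex.exp_neg, mul_comm I, mul_comm I]
  rw [hexp, Circle.one_add_inv_add_eq_zero_iff isPrimitiveRoot_circleExp_two_pi_div_three,
    ← Circle.exp_neg]
  simp only [Circle.exp_eq_exp_iff_exists_int, exists_and_left, exists_and_right, exists_or]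
end
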